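/- arXiv:math/9811146 — 4 statements merged into one kernel-verified Lean document; each statement's English description precedes it below -/
import Mathlib

section
/- Let g ∈ L²(ℝ) and a,b > 0, and suppose g vanishes almost everywhere outside an interval I of length |I| ≤ 1/b. If there exist A, B > 0 with bA ≤ G(x) ≤ bB for almost every x ∈ ℝ − N_G, then {E_{mb}T_{na}g}_{m,n∈ℤ} is a frame for L²(ℝ−N_G) with bounds A and B; in particular it is a frame sequence with bounds A, B. -/
/-!
With `T = 1 / b`, the modulation `x ↦ e^{2πimbx}` is the `m`-th character `fourier m` of
`ℝ / Tℤ`, so `⟨f, E_{mb}T_{na}g⟩` is, up to the factor `T`, a Fourier coefficient of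
`conj f · T_{na}g`. Since `g` lives on an interval of length at most `T`, so does this product,
and Parseval's identity on that interval gives
`∑_m |⟨f, E_{mb}T_{na}g⟩|² = T ∫ |f(x)|² |g(x - na)|² dx`. Summing over `n` (in `ℝ≥0∞`, where
sums and integrals commute freely) gives `∑_{m,n} |⟨f, E_{mb}T_{na}g⟩|² = T ∫ |f|² G`, and for `f`
vanishing on `N_G` the bounds `bA ≤ G ≤ bB` turn this into the frame inequalities.
Every `E_{mb}T_{na}g` vanishes on `N_G`, and `L²(ℝ - N_G)` is a closed subspace, so it contains
the closed span of the system: this gives the frame-sequence statement.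
-/

noncomputable section
open MeasureTheory Complex Filter Set
open scoped ENNReal NNReal ComplexConjugate

/-- The Weyl–Heisenberg system function `E_{mb} T_{na} g`,
`x ↦ e^{2πi m b x} g (x - n a)`. -/
def whFun (g : ℝ → ℂ) (a b : ℝ) (m n : ℤ) : ℝ → ℂ := fun x =>
  Complex.exp (2 * Real.pi * Complex.I * ((m : ℂ) * (b : ℂ)) * (x : ℂ)) * g (x - (n : ℝ) * a)

/-- `G(x) = ∑ₙ |g(x - n a)|²`, as a sum in `[0, ∞]`. -/
def Gfun (g : ℝ → ℂ) (a : ℝ) (x : ℝ) : ℝ≥0∞ :=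
  ∑' n : ℤ, (‖g (x - (n : ℝ) * a)‖₊ : ℝ≥0∞) ^ 2

/-- `v` is a frame for the set `V` with bounds `A, B`:
`A‖f‖² ≤ ∑ᵢ |⟨f, vᵢ⟩|² ≤ B‖f‖²` for all `f ∈ V`. -/
def IsFrameWithFor {H : Type*} [NormedAddCommGroup H] [InnerProductSpace ℂ H]
    {ι : Type*} (v : ι → H) (A B : ℝ) (V : Set H) : Prop :=
  ∀ f ∈ V, A * ‖f‖ ^ 2 ≤ ∑' i, ‖(inner ℂ f (v i) : ℂ)‖ ^ 2 ∧
    ∑' i, ‖(inner ℂ f (v i) : ℂ)‖ ^ 2 ≤ B * ‖f‖ ^ 2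

/-- `v` is a frame sequence with bounds `A, B`: it is a frame for the closure of
the linear span of its range. -/
def IsFrameSeqWith {H : Type*} [NormedAddCommGroup H] [InnerProductSpace ℂ H]
    {ι : Type*} (v : ι → H) (A B : ℝ) : Prop :=
  IsFrameWithFor v A B (closure ((Submodule.span ℂ (Set.range v) : Submodule ℂ H) : Set H))

section

variable {α : Type*} [MeasurableSpace α] {μ : Measure α}

theorem lintegral_enorm_sq_eq_eLpNorm_sq {E : Type*} [NormedAddCommGroup E] (h : α → E) :
    ∫⁻ x, ‖h x‖ₑ ^ 2 ∂μ = eLpNorm h 2 μ ^ 2 := by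
  simpa using (eLpNorm_nnreal_pow_eq_lintegral (f := h) (μ := μ) (p := 2) two_ne_zero).symm

theorem MeasureTheory.Lp.lintegral_enorm_sq {E : Type*} [NormedAddCommGroup E] (f : Lp E 2 μ) :
    ∫⁻ x, ‖f x‖ₑ ^ 2 ∂μ = ENNReal.ofReal (‖f‖ ^ 2) := by
  rw [lintegral_enorm_sq_eq_eLpNorm_sq, Lp.norm_def, ENNReal.ofReal_pow ENNReal.toReal_nonneg,
    ENNReal.ofReal_toReal (Lp.eLpNorm_ne_top f)]

theorem memLp_two_of_lintegral_enorm_sq_ne_top {E : Type*} [NormedAddCommGroup E] {h : α → E}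
    (hm : AEStronglyMeasurable h μ) (hfin : ∫⁻ x, ‖h x‖ₑ ^ 2 ∂μ ≠ ∞) : MemLp h 2 μ := by
  refine ⟨hm, ?_⟩
  rw [lintegral_enorm_sq_eq_eLpNorm_sq] at hfin
  exact lt_top_iff_ne_top.2 fun h => hfin (by simp [h])

theorem lintegral_mul_le_and_le_of_ae {u w : α → ℝ≥0∞} {c C : ℝ≥0∞} (hC : C ≠ ∞)
    (hu : ∀ᵐ x ∂μ, w x = 0 → u x = 0) (hw : ∀ᵐ x ∂μ, w x ≠ 0 → c ≤ w x ∧ w x ≤ C) :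
    c * ∫⁻ x, u x ∂μ ≤ ∫⁻ x, u x * w x ∂μ ∧ ∫⁻ x, u x * w x ∂μ ≤ C * ∫⁻ x, u x ∂μ := by
  have hbounds : ∀ᵐ x ∂μ, c * u x ≤ u x * w x ∧ u x * w x ≤ C * u x := by
    filter_upwards [hu, hw] with x hux hwx
    by_cases h0 : w x = 0
    · simp [h0, hux h0]
    · rw [mul_comm (u x)]
      exact ⟨mul_le_mul_left (hwx h0).1 _, mul_le_mul_left (hwx h0).2 _⟩
  constructor
  · exact (lintegral_const_mul_le c u).trans (lintegral_mono_ae (hbounds.mono fun x hx => hx.1))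
  · rw [← lintegral_const_mul' C u hC]
    exact lintegral_mono_ae (hbounds.mono fun x hx => hx.2)

theorem MeasureTheory.Lp.closure_span_subset_setOf_ae_eq_zero {E 𝕜 ι : Type*}
    [NormedAddCommGroup E] [NormedField 𝕜] [NormedSpace 𝕜 E] {p : ℝ≥0∞} [Fact (1 ≤ p)]
    {s : Set α} (hs : NullMeasurableSet s μ) (v : ι → Lp E p μ)
    (hv : ∀ i, ∀ᵐ x ∂μ, x ∈ s → v i x = 0) :
    closure (Submodule.span 𝕜 (range v) : Set (Lp E p μ)) ⊆
      {f : Lp E p μ | ∀ᵐ x ∂μ, x ∈ s → f x = 0} := by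
  have hker : ((LpToLpRestrictCLM α E 𝕜 μ p s).ker : Set (Lp E p μ)) =
      {f | ∀ᵐ x ∂μ, x ∈ s → f x = 0} := by
    ext f
    rw [SetLike.mem_coe, LinearMap.mem_ker, mem_ofPred_eq, ← ae_restrict_iff'₀ hs,
      Lp.eq_zero_iff_ae_eq_zero]
    exact ⟨(LpToLpRestrictCLM_coeFn 𝕜 s f).symm.trans, (LpToLpRestrictCLM_coeFn 𝕜 s f).trans⟩
  rw [← hker]
  exact closure_minimal (Submodule.span_le.2 (by rintro _ ⟨i, rfl⟩; rw [hker]; exact hv i))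
    (ContinuousLinearMap.isClosed_ker _)

end

theorem toReal_tsum_enorm_sq {ι E : Type*} [NormedAddCommGroup E] (z : ι → E) :
    (∑' i, ‖z i‖ₑ ^ 2).toReal = ∑' i, ‖z i‖ ^ 2 := by
  rw [ENNReal.tsum_toReal_eq fun i => by simp]
  simp [ENNReal.toReal_pow]

theorem MeasureTheory.AEStronglyMeasurable.comp_sub_right {β : Type*} [TopologicalSpace β]
    {g : ℝ → β} (hg : AEStronglyMeasurable g) (t : ℝ) : AEStronglyMeasurable fun x => g (x - t) :=
  hg.comp_quasiMeasurePreserving (measurePreserving_sub_right volume t).quasiMeasurePreserving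

theorem ae_eq_zero_outside_Ioc_of_Icc {E : Type*} [Zero E] {g : ℝ → E} {c d T : ℝ}
    (hcd : d - c ≤ T) (hg : ∀ᵐ x, x ∉ Icc c d → g x = 0) :
    ∀ᵐ x, x ∉ Ioc (d - T) (d - T + T) → g x = 0 := by
  filter_upwards [hg, Ioc_ae_eq_Icc (a := d - T) (b := d) (μ := volume)] with x hx hIoc hnot
  rw [sub_add_cancel] at hnot
  refine hx fun hmem => hnot ?_
  change Ioc (d - T) d x
  rw [hIoc]
  exact ⟨by linarith [hmem.1], hmem.2⟩

theorem hasSum_sq_norm_integral_fourier_mul {T : ℝ} [hT : Fact (0 < T)] {a : ℝ} {h : ℝ → ℂ}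
    (hL2 : MemLp h 2 volume) (hvan : ∀ᵐ x, x ∉ Ioc a (a + T) → h x = 0) :
    HasSum (fun m : ℤ => ‖∫ x : ℝ, fourier m (x : AddCircle T) * h x‖ ^ 2)
      (T * ∫ x, ‖h x‖ ^ 2) := by
  have hT0 : T ≠ 0 := hT.out.ne'
  have haT : a ≤ a + T := (lt_add_of_pos_right a hT.out).le
  have hinterval {E : Type} [NormedAddCommGroup E] [NormedSpace ℝ E] (u : ℝ → E)
      (hu : ∀ᵐ x, x ∉ Ioc a (a + T) → u x = 0) : ∫ x in a..a + T, u x = ∫ x, u x := by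
    rw [intervalIntegral.integral_of_le haT]
    exact setIntegral_eq_integral_of_ae_compl_eq_zero hu
  -- `fourierCoeffOn` lives on `AddCircle (a + T - a)`; passing through `liftIoc` keeps the
  -- circle `AddCircle T` that appears in the statement.
  have hcoeff (m : ℤ) : fourierCoeffOn (lt_add_of_pos_right a hT.out) h (-m) =
      (1 / T) • ∫ x : ℝ, fourier m (x : AddCircle T) * h x := by
    rw [← fourierCoeff_liftIoc_eq, fourierCoeff_eq_intervalIntegral _ _ a, neg_neg,
      ← hinterval _ (hvan.mono fun x hx hx' => by rw [hx hx', mul_zero])]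
    congr 1
    refine intervalIntegral.integral_congr_ae (ae_of_all _ fun x hx => ?_)
    rw [uIoc_of_le haT] at hx
    rw [AddCircle.liftIoc_coe_apply hx, smul_eq_mul]
  have hparseval := hasSum_sq_fourierCoeffOn (lt_add_of_pos_right a hT.out) (hL2.restrict _)
  rw [← (Equiv.neg ℤ).hasSum_iff] at hparseval
  simp only [Function.comp_def, Equiv.neg_apply, hcoeff, norm_smul, add_sub_cancel_left,
    hinterval (fun x => ‖h x‖ ^ 2)
      (hvan.mono fun x hx hx' => by rw [hx hx', norm_zero, sq, mul_zero])] at hparseval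
  have hterms : (fun m : ℤ => ‖∫ x : ℝ, fourier m (x : AddCircle T) * h x‖ ^ 2) =
      fun m => T ^ 2 * (‖1 / T‖ * ‖∫ x : ℝ, fourier m (x : AddCircle T) * h x‖) ^ 2 := by
    ext m
    rw [norm_div, norm_one, Real.norm_of_nonneg hT.out.le]
    field_simp
  rw [hterms, show T * ∫ x, ‖h x‖ ^ 2 = T ^ 2 * (T⁻¹ • ∫ x, ‖h x‖ ^ 2) by
    rw [smul_eq_mul]; field_simp]
  exact hparseval.mul_left _

theorem tsum_enorm_integral_fourier_mul_sq {T : ℝ} [hT : Fact (0 < T)] {a : ℝ} {h : ℝ → ℂ}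
    (hL2 : MemLp h 2 volume) (hvan : ∀ᵐ x, x ∉ Ioc a (a + T) → h x = 0) :
    ∑' m : ℤ, ‖∫ x : ℝ, fourier m (x : AddCircle T) * h x‖ₑ ^ 2 =
      ENNReal.ofReal T * ∫⁻ x, ‖h x‖ₑ ^ 2 := by
  have hsum := hasSum_sq_norm_integral_fourier_mul hL2 hvan
  have hofReal (z : ℂ) : ‖z‖ₑ ^ 2 = ENNReal.ofReal (‖z‖ ^ 2) := by
    rw [ENNReal.ofReal_pow (norm_nonneg z), ofReal_norm]
  simp_rw [hofReal]
  rw [← ENNReal.ofReal_tsum_of_nonneg (fun _ => sq_nonneg _) hsum.summable, hsum.tsum_eq,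
    ENNReal.ofReal_mul hT.out.le, ofReal_integral_eq_lintegral_ofReal
      ((memLp_two_iff_integrable_sq_norm hL2.1).1 hL2) (ae_of_all _ fun _ => sq_nonneg _)]

theorem whFun_eq_fourier_mul (g : ℝ → ℂ) (a b : ℝ) (m n : ℤ) (x : ℝ) :
    whFun g a b m n x = fourier m (x : AddCircle (1 / b)) * g (x - n * a) := by
  rw [whFun, fourier_coe_apply]
  congr 2
  push_cast
  field_simp

theorem Gfun_eq_tsum_enorm (g : ℝ → ℂ) (a x : ℝ) :
    Gfun g a x = ∑' n : ℤ, ‖g (x - n * a)‖ₑ ^ 2 := rfl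

theorem whFun_eq_zero_of_Gfun_eq_zero {g : ℝ → ℂ} {a b x : ℝ} (hx : Gfun g a x = 0)
    (m n : ℤ) : whFun g a b m n x = 0 := by
  have hle : ‖g (x - n * a)‖ₑ ^ 2 ≤ Gfun g a x := ENNReal.le_tsum n
  rw [hx, nonpos_iff_eq_zero, pow_eq_zero_iff two_ne_zero, enorm_eq_zero] at hle
  rw [whFun, hle, mul_zero]

theorem aemeasurable_Gfun {g : ℝ → ℂ} (hg : AEStronglyMeasurable g) (a : ℝ) :
    AEMeasurable (Gfun g a) :=
  AEMeasurable.tsum fun n : ℤ => (hg.comp_sub_right (n * a)).enorm.pow_const 2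

theorem inner_eq_integral_fourier_mul {g : ℝ → ℂ} {a b : ℝ} {m n : ℤ}
    (f h : Lp ℂ 2 (volume : Measure ℝ)) (hh : h =ᵐ[volume] whFun g a b m n) :
    inner ℂ f h = ∫ x : ℝ, fourier m (x : AddCircle (1 / b)) * (conj (f x) * g (x - n * a)) := by
  rw [L2.inner_def]
  refine integral_congr_ae ?_
  filter_upwards [hh] with x hx
  rw [RCLike.inner_apply', hx, whFun_eq_fourier_mul]
  ring

theorem tsum_enorm_inner_whFun_sq {g : ℝ → ℂ} (hg : AEStronglyMeasurable g) {a b c : ℝ}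
    (hb : 0 < b) (hsupp : ∀ᵐ x, x ∉ Ioc c (c + 1 / b) → g x = 0) (n : ℤ)
    (F : ℤ → Lp ℂ 2 (volume : Measure ℝ)) (hF : ∀ m, F m =ᵐ[volume] whFun g a b m n)
    (f : Lp ℂ 2 (volume : Measure ℝ)) (hfin : ∫⁻ x, ‖f x‖ₑ ^ 2 * ‖g (x - n * a)‖ₑ ^ 2 ≠ ∞) :
    ∑' m, ‖inner ℂ f (F m)‖ₑ ^ 2 =
      ENNReal.ofReal (1 / b) * ∫⁻ x, ‖f x‖ₑ ^ 2 * ‖g (x - n * a)‖ₑ ^ 2 := by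
  have : Fact (0 < 1 / b) := ⟨by positivity⟩
  set φ : ℝ → ℂ := fun x => conj (f x) * g (x - n * a)
  have hφ_enorm (x : ℝ) : ‖φ x‖ₑ ^ 2 = ‖f x‖ₑ ^ 2 * ‖g (x - n * a)‖ₑ ^ 2 := by
    simp only [φ, enorm_mul, RCLike.enorm_conj, mul_pow]
  have hφL2 : MemLp φ 2 volume := by
    refine memLp_two_of_lintegral_enorm_sq_ne_top ?_ (by simpa only [hφ_enorm] using hfin)
    exact (Lp.aestronglyMeasurable f).star.mul (hg.comp_sub_right _)
  have hφvan : ∀ᵐ x, x ∉ Ioc (c + n * a) (c + n * a + 1 / b) → φ x = 0 := by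
    have hshift := (measurePreserving_sub_right volume ((n : ℝ) * a)).quasiMeasurePreserving
    filter_upwards [hshift.ae hsupp] with x hx hnot
    change conj (f x) * g (x - n * a) = 0
    rw [hx fun hmem => hnot ⟨by linarith [hmem.1], by linarith [hmem.2]⟩, mul_zero]
  simp_rw [← hφ_enorm, ← tsum_enorm_integral_fourier_mul_sq hφL2 hφvan,
    inner_eq_integral_fourier_mul f _ (hF _)]
  rfl

theorem tsum_enorm_inner_whFun_sq_eq_lintegral_Gfun {g : ℝ → ℂ} (hg : AEStronglyMeasurable g)
    {a b c : ℝ} (hb : 0 < b) (hsupp : ∀ᵐ x, x ∉ Ioc c (c + 1 / b) → g x = 0)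
    (F : ℤ × ℤ → Lp ℂ 2 (volume : Measure ℝ))
    (hF : ∀ p : ℤ × ℤ, F p =ᵐ[volume] whFun g a b p.1 p.2)
    (f : Lp ℂ 2 (volume : Measure ℝ)) (hfin : ∫⁻ x, ‖f x‖ₑ ^ 2 * Gfun g a x ≠ ∞) :
    ∑' p, ‖inner ℂ f (F p)‖ₑ ^ 2 = ENNReal.ofReal (1 / b) * ∫⁻ x, ‖f x‖ₑ ^ 2 * Gfun g a x := by
  have hrow (n : ℤ) := tsum_enorm_inner_whFun_sq hg hb hsupp n (fun m => F (m, n))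
    (fun m => hF (m, n)) f (ne_top_of_le_ne_top hfin
      (lintegral_mono fun x => mul_le_mul_right (ENNReal.le_tsum n) _))
  have hmeas (n : ℤ) : AEMeasurable fun x => ‖f x‖ₑ ^ 2 * ‖g (x - n * a)‖ₑ ^ 2 :=
    ((Lp.aestronglyMeasurable f).enorm.pow_const 2).mul ((hg.comp_sub_right _).enorm.pow_const 2)
  rw [ENNReal.tsum_prod (f := fun m n => ‖inner ℂ f (F (m, n))‖ₑ ^ 2), ENNReal.tsum_comm]
  simp_rw [hrow, Gfun_eq_tsum_enorm, ← ENNReal.tsum_mul_left]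
  rw [ENNReal.tsum_mul_left, ← lintegral_tsum hmeas]

theorem isFrameWithFor_whFun {g : ℝ → ℂ} (hg : AEStronglyMeasurable g) {a b c A B : ℝ}
    (hb : 0 < b) (hB : 0 ≤ B) (hsupp : ∀ᵐ x, x ∉ Ioc c (c + 1 / b) → g x = 0)
    (hG : ∀ᵐ x : ℝ, Gfun g a x ≠ 0 →
      ENNReal.ofReal (b * A) ≤ Gfun g a x ∧ Gfun g a x ≤ ENNReal.ofReal (b * B))
    (F : ℤ × ℤ → Lp ℂ 2 (volume : Measure ℝ))
    (hF : ∀ p : ℤ × ℤ, F p =ᵐ[volume] whFun g a b p.1 p.2) :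
    IsFrameWithFor F A B {f : Lp ℂ 2 (volume : Measure ℝ) | ∀ᵐ x, Gfun g a x = 0 → f x = 0} := by
  intro f hf
  rw [mem_ofPred_eq] at hf
  obtain ⟨hlow, hup⟩ := lintegral_mul_le_and_le_of_ae (u := fun x => ‖f x‖ₑ ^ 2)
    ENNReal.ofReal_ne_top (hf.mono fun x hx h0 => by simp [hx h0]) hG
  rw [Lp.lintegral_enorm_sq, ← ENNReal.ofReal_mul' (sq_nonneg _)] at hlow hup
  set I := ∫⁻ x, ‖f x‖ₑ ^ 2 * Gfun g a x
  have hI : I ≠ ∞ := ne_top_of_le_ne_top ENNReal.ofReal_ne_top hup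
  have hsum : ∑' p, ‖inner ℂ f (F p)‖ ^ 2 = 1 / b * I.toReal := by
    rw [← toReal_tsum_enorm_sq, tsum_enorm_inner_whFun_sq_eq_lintegral_Gfun hg hb hsupp F hF
      f hI, ENNReal.toReal_mul, ENNReal.toReal_ofReal (by positivity)]
  have hlow' := (ENNReal.ofReal_le_iff_le_toReal hI).1 hlow
  have hup' := ENNReal.toReal_le_of_le_ofReal (by positivity) hup
  rw [hsum]
  constructor
  · calc A * ‖f‖ ^ 2 = 1 / b * (b * A * ‖f‖ ^ 2) := by field_simp
      _ ≤ 1 / b * I.toReal := by gcongr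
  · calc 1 / b * I.toReal ≤ 1 / b * (b * B * ‖f‖ ^ 2) := by gcongr
      _ = B * ‖f‖ ^ 2 := by field_simp

theorem wh_compact_support_frame_general
    (g : ℝ → ℂ) (hg : MemLp g 2 (volume : Measure ℝ)) (a b A B : ℝ)
    (hb : 0 < b) (hB : 0 < B)
    (hsupp : ∃ c d : ℝ, d - c ≤ 1 / b ∧ ∀ᵐ x : ℝ, x ∉ Set.Icc c d → g x = 0)
    (hG : ∀ᵐ x : ℝ, Gfun g a x ≠ 0 →
      ENNReal.ofReal (b * A) ≤ Gfun g a x ∧ Gfun g a x ≤ ENNReal.ofReal (b * B))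
    (F : ℤ × ℤ → Lp ℂ 2 (volume : Measure ℝ))
    (hF : ∀ p : ℤ × ℤ, (F p : ℝ → ℂ) =ᵐ[volume] whFun g a b p.1 p.2) :
    IsFrameWithFor F A B {f : Lp ℂ 2 (volume : Measure ℝ) |
        ∀ᵐ x : ℝ, Gfun g a x = 0 → (f : ℝ → ℂ) x = 0} ∧
      IsFrameSeqWith F A B := by
  obtain ⟨c, d, hcd, hgvan⟩ := hsupp
  have hframe := isFrameWithFor_whFun hg.aestronglyMeasurable hb hB.le
    (ae_eq_zero_outside_Ioc_of_Icc hcd hgvan) hG F hF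
  have hNG : NullMeasurableSet {x | Gfun g a x = 0} :=
    (aemeasurable_Gfun hg.aestronglyMeasurable a).nullMeasurable (measurableSet_singleton 0)
  have hspan := Lp.closure_span_subset_setOf_ae_eq_zero (𝕜 := ℂ) hNG F fun p => by
    filter_upwards [hF p] with x hx h0
    rw [hx, whFun_eq_zero_of_Gfun_eq_zero h0]
  exact ⟨hframe, fun f hf => hframe f (hspan hf)⟩

/-- **Corollary 2.2 (sufficiency)**. If `g` vanishes a.e. outside an interval of
length `≤ 1/b` and `bA ≤ G(x) ≤ bB` a.e. on `ℝ - N_G`, then `{E_{mb} T_{na} g}`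
is a frame for `L²(ℝ - N_G)` with bounds `A, B`; in particular it is a frame
sequence with bounds `A, B`. -/
theorem wh_compact_support_frame
    (g : ℝ → ℂ) (hg : MemLp g 2 (volume : Measure ℝ)) (a b A B : ℝ)
    (ha : 0 < a) (hb : 0 < b) (hA : 0 < A) (hB : 0 < B)
    (hsupp : ∃ c d : ℝ, d - c ≤ 1 / b ∧ ∀ᵐ x : ℝ, x ∉ Set.Icc c d → g x = 0)
    (hG : ∀ᵐ x : ℝ, Gfun g a x ≠ 0 →
      ENNReal.ofReal (b * A) ≤ Gfun g a x ∧ Gfun g a x ≤ ENNReal.ofReal (b * B))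
    (F : ℤ × ℤ → Lp ℂ 2 (volume : Measure ℝ))
    (hF : ∀ p : ℤ × ℤ, (F p : ℝ → ℂ) =ᵐ[volume] whFun g a b p.1 p.2) :
    IsFrameWithFor F A B {f : Lp ℂ 2 (volume : Measure ℝ) |
        ∀ᵐ x : ℝ, Gfun g a x = 0 → (f : ℝ → ℂ) x = 0} ∧
      IsFrameSeqWith F A B :=
  wh_compact_support_frame_general g hg a b A B hb hB hsupp hG F hF
end
end

section
/- Let g ∈ L²(ℝ) and a,b > 0, and for k ∈ ℤ define H_k(x) = ∑_{n∈ℤ} g(x−na)·conj(g(x−na−k/b)). Then for every continuous compactly supported function f on ℝ, ∑_{k∈ℤ,k≠0} |∫ conj(f(x)) f(x−k/b) H_k(x) dx| ≤ ∫ |f(x)|² ∑_{k∈ℤ,k≠0} |H_k(x)| dx. -/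
/-!
Bound the `k`-th integral by `∫ |f(x)| |f(x - k/b)| |H_k(x)|` and split it with
`2 |f(x)| |f(x - k/b)| ≤ |f(x)|² + |f(x - k/b)|²`. Since `|H_k(x + k/b)| = |H_{-k}(x)|`, translating
the second half by `k/b` turns it into the first half of the `(-k)`-th term, so after summing over
`k ≠ 0` each weight `|H_k|` is counted exactly twice against `|f|²` (a Schur test).
-/

noncomputable section
open MeasureTheory Complex Filter Set
open scoped ENNReal NNReal ComplexConjugate


/-- `H_k(x) = ∑ₙ g(x - n a) · conj (g (x - n a - k / b))`. -/
def Hfun (g : ℝ → ℂ) (a b : ℝ) (k : ℤ) (x : ℝ) : ℂ :=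
  ∑' n : ℤ, g (x - (n : ℝ) * a) * conj (g (x - (n : ℝ) * a - (k : ℝ) / b))

lemma ENNReal.two_mul_le_add_sq (x y : ℝ≥0∞) : 2 * x * y ≤ x ^ 2 + y ^ 2 := by
  rcases eq_or_ne x ⊤ with rfl | hx
  · rcases eq_or_ne y 0 with rfl | hy <;> simp [*]
  rcases eq_or_ne y ⊤ with rfl | hy
  · rcases eq_or_ne x 0 with rfl | hx0 <;> simp [*]
  lift x to ℝ≥0 using hx
  lift y to ℝ≥0 using hy
  exact_mod_cast _root_.two_mul_le_add_sq x y

section SchurTest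

variable {G : Type*} [MeasurableSpace G] [AddGroup G] [MeasurableAdd G]
  {μ : Measure G} [μ.IsAddRightInvariant]

/-- AM-GM under the integral, followed by the substitution `x ↦ x + c` in the second term. -/
lemma two_mul_lintegral_mul_comp_sub_le {u w : G → ℝ≥0∞}
    (huw : AEMeasurable (fun x ↦ u x ^ 2 * w x) μ) (c : G) :
    2 * ∫⁻ x, u x * u (x - c) * w x ∂μ ≤
      ∫⁻ x, u x ^ 2 * w x ∂μ + ∫⁻ x, u x ^ 2 * w (x + c) ∂μ := by
  have hshift : ∫⁻ x, u (x - c) ^ 2 * w x ∂μ = ∫⁻ x, u x ^ 2 * w (x + c) ∂μ := by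
    simpa using (lintegral_add_right_eq_self (μ := μ) (fun x ↦ u (x - c) ^ 2 * w x) c).symm
  calc 2 * ∫⁻ x, u x * u (x - c) * w x ∂μ
      = ∫⁻ x, 2 * u x * u (x - c) * w x ∂μ := by
        rw [← lintegral_const_mul' _ _ ENNReal.ofNat_ne_top]
        simp only [mul_assoc]
    _ ≤ ∫⁻ x, u x ^ 2 * w x + u (x - c) ^ 2 * w x ∂μ := by
        gcongr with x
        rw [← add_mul]
        gcongr
        exact ENNReal.two_mul_le_add_sq _ _
    _ = _ := by rw [lintegral_add_left' huw, hshift]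

lemma tsum_lintegral_mul_comp_sub_le {ι : Type*} [Countable ι] (σ : ι ≃ ι) (c : ι → G)
    {u : G → ℝ≥0∞} {w : ι → G → ℝ≥0∞} (hu : AEMeasurable u μ) (hw : ∀ i, AEMeasurable (w i) μ)
    (hsymm : ∀ i x, w i (x + c i) = w (σ i) x) :
    ∑' i, ∫⁻ x, u x * u (x - c i) * w i x ∂μ ≤ ∫⁻ x, u x ^ 2 * ∑' i, w i x ∂μ := by
  have huw : ∀ i, AEMeasurable (fun x ↦ u x ^ 2 * w i x) μ := fun i ↦ (hu.pow_const 2).mul (hw i)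
  have hsum : ∑' i, ∫⁻ x, u x ^ 2 * w i x ∂μ = ∫⁻ x, u x ^ 2 * ∑' i, w i x ∂μ := by
    simp_rw [← lintegral_tsum huw, ENNReal.tsum_mul_left]
  rw [← hsum, ← ENNReal.mul_le_mul_iff_right (two_ne_zero' ℝ≥0∞) ENNReal.ofNat_ne_top,
    ← ENNReal.tsum_mul_left]
  calc ∑' i, 2 * ∫⁻ x, u x * u (x - c i) * w i x ∂μ
      ≤ ∑' i, (∫⁻ x, u x ^ 2 * w i x ∂μ + ∫⁻ x, u x ^ 2 * w (σ i) x ∂μ) :=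
        ENNReal.tsum_le_tsum fun i ↦ by
          simpa only [hsymm] using two_mul_lintegral_mul_comp_sub_le (huw i) (c i)
    _ = 2 * ∑' i, ∫⁻ x, u x ^ 2 * w i x ∂μ := by
        rw [ENNReal.tsum_add, σ.tsum_eq (fun i ↦ ∫⁻ x, u x ^ 2 * w i x ∂μ), two_mul]

end SchurTest

lemma Hfun_neg (g : ℝ → ℂ) (a b : ℝ) (k : ℤ) (x : ℝ) :
    Hfun g a b (-k) x = conj (Hfun g a b k (x + k / b)) := by
  rw [Hfun, Hfun, Complex.conj_tsum]
  refine tsum_congr fun n ↦ ?_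
  push_cast
  rw [map_mul, conj_conj, mul_comm, add_sub_right_comm, add_sub_cancel_right, neg_div,
    sub_neg_eq_add]

lemma aemeasurable_Hfun {g : ℝ → ℂ} (hg : AEMeasurable g) (a b : ℝ) (k : ℤ) :
    AEMeasurable (Hfun g a b k) := by
  have htrans : ∀ c : ℝ, AEMeasurable (fun x ↦ g (x - c)) :=
    fun c ↦ hg.comp_quasiMeasurePreserving
      (measurePreserving_sub_right volume c).quasiMeasurePreserving
  refine AEMeasurable.tsum fun n ↦ (htrans _).mul ?_
  simpa only [sub_sub, Function.comp_def] using
    Complex.continuous_conj.measurable.comp_aemeasurable (htrans (n * a + k / b))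

theorem offdiagonal_estimate_general
    (g : ℝ → ℂ) (hg : MemLp g 2 (volume : Measure ℝ)) (a b : ℝ)
    (f : ℝ → ℂ) (hf : Continuous f) :
    ∑' k : {k : ℤ // k ≠ 0},
        (‖∫ x : ℝ, conj (f x) * f (x - (k : ℝ) / b) * Hfun g a b (k : ℤ) x‖₊ : ℝ≥0∞) ≤
      ∫⁻ x : ℝ, (‖f x‖₊ : ℝ≥0∞) ^ 2 *
        ∑' k : {k : ℤ // k ≠ 0}, (‖Hfun g a b (k : ℤ) x‖₊ : ℝ≥0∞) := by
  let σ : {k : ℤ // k ≠ 0} ≃ {k : ℤ // k ≠ 0} :=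
    (Equiv.neg ℤ).subtypeEquiv fun _ ↦ neg_ne_zero.symm
  calc ∑' k : {k : ℤ // k ≠ 0},
        (‖∫ x : ℝ, conj (f x) * f (x - (k : ℝ) / b) * Hfun g a b (k : ℤ) x‖₊ : ℝ≥0∞)
      ≤ ∑' k : {k : ℤ // k ≠ 0},
          ∫⁻ x, ‖f x‖ₑ * ‖f (x - (k : ℝ) / b)‖ₑ * ‖Hfun g a b k x‖ₑ :=
        ENNReal.tsum_le_tsum fun k ↦ (enorm_integral_le_lintegral_enorm _).trans_eq <| by
          simp only [enorm_mul, RCLike.enorm_conj]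
    _ ≤ _ := tsum_lintegral_mul_comp_sub_le σ (fun k ↦ (k : ℝ) / b)
        hf.measurable.enorm.aemeasurable
        (fun k ↦ (aemeasurable_Hfun hg.aestronglyMeasurable.aemeasurable a b k).enorm)
        fun k x ↦ by
          change _ = ‖Hfun g a b (-k) x‖ₑ
          rw [Hfun_neg, RCLike.enorm_conj]

/-- The key estimate in Theorem 2.1: for every continuous compactly supported `f`,
`∑_{k≠0} |∫ conj(f(x)) f(x - k/b) H_k(x) dx| ≤ ∫ |f(x)|² ∑_{k≠0} |H_k(x)| dx`. -/
theorem offdiagonal_estimate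
    (g : ℝ → ℂ) (hg : MemLp g 2 (volume : Measure ℝ)) (a b : ℝ)
    (ha : 0 < a) (hb : 0 < b)
    (f : ℝ → ℂ) (hf : Continuous f) (hfc : HasCompactSupport f) :
    ∑' k : {k : ℤ // k ≠ 0},
        (‖∫ x : ℝ, conj (f x) * f (x - (k : ℝ) / b) * Hfun g a b (k : ℤ) x‖₊ : ℝ≥0∞) ≤
      ∫⁻ x : ℝ, (‖f x‖₊ : ℝ≥0∞) ^ 2 *
        ∑' k : {k : ℤ // k ≠ 0}, (‖Hfun g a b (k : ℤ) x‖₊ : ℝ≥0∞) :=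
  offdiagonal_estimate_general g hg a b f hf
end
end

section
/- Define g(x) = x for x ∈ [0,1], g(x) = √(2x−x²) for x ∈ (1,2], and g(x) = 0 otherwise. Then the system {E_m T_{2n} g}_{m,n∈ℤ} (i.e., the Weyl–Heisenberg system with a = 2, b = 1) is an orthonormal family in L²(ℝ). -/
noncomputable section
open MeasureTheory Complex Filter Set
open scoped ENNReal NNReal ComplexConjugate

/-- The function `g` of the second Example: `g(x) = x` on `[0,1]`,
`g(x) = √(2x - x²)` on `(1,2]`, and `0` otherwise. -/
def gEx2 : ℝ → ℂ := fun x =>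
  if 0 ≤ x ∧ x ≤ 1 then ((x : ℝ) : ℂ)
  else if 1 < x ∧ x ≤ 2 then ((Real.sqrt (2 * x - x ^ 2) : ℝ) : ℂ)
  else 0

def gR : ℝ → ℝ := fun x =>
  if 0 ≤ x ∧ x ≤ 1 then x
  else if 1 < x ∧ x ≤ 2 then Real.sqrt (2 * x - x ^ 2)
  else 0

lemma gR_support {x : ℝ} (h : gR x ≠ 0) : 0 < x ∧ x < 2 := by
  unfold gR at h
  split_ifs at h with h1 h2
  · exact ⟨lt_of_le_of_ne h1.1 (Ne.symm h), lt_of_le_of_lt h1.2 one_lt_two⟩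
  · have hpos : 0 < 2 * x - x ^ 2 := by
      have h' := (Real.sqrt_eq_zero').not.mp h
      push_neg at h'; exact h'
    exact ⟨by linarith [h2.1], by nlinarith [h2.1]⟩
  · exact absurd rfl h

lemma gR_sq_left {x : ℝ} (h0 : 0 ≤ x) (h1 : x ≤ 1) : gR x ^ 2 = x ^ 2 := by
  unfold gR; rw [if_pos ⟨h0, h1⟩]

lemma gR_sq_right {x : ℝ} (h1 : 1 ≤ x) (h2 : x ≤ 2) : gR x ^ 2 = 2 * x - x ^ 2 := by
  unfold gR
  rcases eq_or_lt_of_le h1 with h | h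
  · rw [if_pos ⟨by linarith, by linarith⟩]; nlinarith
  · rw [if_neg (by push_neg; intro _; linarith), if_pos ⟨h, h2⟩,
      Real.sq_sqrt (by nlinarith)]

lemma hexpc (k j : ℤ) : Complex.exp (2 * Real.pi * Complex.I * (k : ℂ) * (j : ℂ)) = 1 := by
  have : 2 * (Real.pi : ℂ) * Complex.I * (k : ℂ) * (j : ℂ)
      = ((k * j : ℤ) : ℂ) * (2 * Real.pi * Complex.I) := by push_cast; ring
  rw [this, Complex.exp_int_mul_two_pi_mul_I]

lemma keyIntegral (k : ℤ) :
    (∫ x : ℝ, Complex.exp (2 * Real.pi * Complex.I * (k : ℂ) * (x : ℂ)) * ((gR x : ℂ)) ^ 2)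
      = if k = 0 then 1 else 0 := by
  set c : ℂ := 2 * Real.pi * Complex.I * (k : ℂ) with hc
  have hec : ∀ j : ℤ, Complex.exp (c * (j : ℂ)) = 1 := by
    intro j; rw [hc, mul_assoc]
    have := hexpc k j
    rw [← this]; ring_nf
  have hsupp : (fun x : ℝ => Complex.exp (c * (x : ℂ)) * ((gR x : ℂ)) ^ 2)
      = (Ioc (0:ℝ) 2).indicator (fun x : ℝ => Complex.exp (c * (x : ℂ)) * ((gR x : ℂ)) ^ 2) := by
    funext x
    by_cases hx : x ∈ Ioc (0:ℝ) 2
    · rw [indicator_of_mem hx]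
    · rw [indicator_of_notMem hx]
      have : gR x = 0 := by
        by_contra h
        exact hx ⟨(gR_support h).1, le_of_lt (gR_support h).2⟩
      simp [this]
  have hstep : (∫ x : ℝ, Complex.exp (c * (x : ℂ)) * ((gR x : ℂ)) ^ 2)
      = ∫ x in (0:ℝ)..2, Complex.exp (c * (x : ℂ)) * ((gR x : ℂ)) ^ 2 := by
    rw [intervalIntegral.integral_of_le (by norm_num : (0:ℝ) ≤ 2),
      ← integral_indicator measurableSet_Ioc, ← hsupp]
  have hce : Continuous (fun x : ℝ => Complex.exp (c * (x : ℂ))) :=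
    Complex.continuous_exp.comp (continuous_const.mul Complex.continuous_ofReal)
  have hcont1 : Continuous (fun x : ℝ => Complex.exp (c * (x : ℂ)) * ((x : ℂ)) ^ 2) :=
    hce.mul (Complex.continuous_ofReal.pow 2)
  have hcont2 : Continuous (fun x : ℝ => Complex.exp (c * (x : ℂ)) * ((2 * x - x ^ 2 : ℝ) : ℂ)) :=
    hce.mul (Complex.continuous_ofReal.comp ((continuous_const.mul continuous_id).sub (continuous_pow 2)))
  have heq1 : EqOn (fun x : ℝ => Complex.exp (c * (x : ℂ)) * ((gR x : ℂ)) ^ 2)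
      (fun x : ℝ => Complex.exp (c * (x : ℂ)) * ((x : ℂ)) ^ 2) (uIcc (0:ℝ) 1) := by
    intro x hx
    rw [uIcc_of_le (by norm_num : (0:ℝ) ≤ 1)] at hx
    simp only
    rw [show ((gR x : ℂ)) ^ 2 = (((gR x ^ 2 : ℝ)) : ℂ) by push_cast; ring,
      gR_sq_left hx.1 hx.2]
    push_cast; ring
  have heq2 : EqOn (fun x : ℝ => Complex.exp (c * (x : ℂ)) * ((gR x : ℂ)) ^ 2)
      (fun x : ℝ => Complex.exp (c * (x : ℂ)) * ((2 * x - x ^ 2 : ℝ) : ℂ)) (uIcc (1:ℝ) 2) := by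
    intro x hx
    rw [uIcc_of_le (by norm_num : (1:ℝ) ≤ 2)] at hx
    simp only
    rw [show ((gR x : ℂ)) ^ 2 = (((gR x ^ 2 : ℝ)) : ℂ) by push_cast; ring,
      gR_sq_right hx.1 hx.2]
  have hii1 : IntervalIntegrable (fun x : ℝ => Complex.exp (c * (x : ℂ)) * ((gR x : ℂ)) ^ 2) volume 0 1 := by
    rw [intervalIntegrable_iff_integrableOn_Ioc_of_le (by norm_num : (0:ℝ) ≤ 1)]
    exact hcont1.integrableOn_Ioc.congr_fun
      (fun x hx => (heq1 (by rw [uIcc_of_le (by norm_num : (0:ℝ) ≤ 1)]; exact Ioc_subset_Icc_self hx)).symm)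
      measurableSet_Ioc
  have hii2 : IntervalIntegrable (fun x : ℝ => Complex.exp (c * (x : ℂ)) * ((gR x : ℂ)) ^ 2) volume 1 2 := by
    rw [intervalIntegrable_iff_integrableOn_Ioc_of_le (by norm_num : (1:ℝ) ≤ 2)]
    exact hcont2.integrableOn_Ioc.congr_fun
      (fun x hx => (heq2 (by rw [uIcc_of_le (by norm_num : (1:ℝ) ≤ 2)]; exact Ioc_subset_Icc_self hx)).symm)
      measurableSet_Ioc
  rw [hstep, ← intervalIntegral.integral_add_adjacent_intervals hii1 hii2,
    intervalIntegral.integral_congr heq1, intervalIntegral.integral_congr heq2]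
  have hshift : (∫ x in (1:ℝ)..2, Complex.exp (c * (x : ℂ)) * ((2 * x - x ^ 2 : ℝ) : ℂ))
      = ∫ x in (0:ℝ)..1, Complex.exp (c * (x : ℂ)) * ((1 - x ^ 2 : ℝ) : ℂ) := by
    have h := intervalIntegral.integral_comp_add_right (a := (0:ℝ)) (b := 1)
      (fun x : ℝ => Complex.exp (c * (x : ℂ)) * ((2 * x - x ^ 2 : ℝ) : ℂ)) 1
    simp only [zero_add, one_add_one_eq_two] at h
    rw [← h]
    apply intervalIntegral.integral_congr
    intro x hx
    simp only
    have h1 : Complex.exp (c * ((x + 1 : ℝ) : ℂ)) = Complex.exp (c * (x : ℂ)) := by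
      rw [show c * ((x + 1 : ℝ) : ℂ) = c * (x : ℂ) + c * ((1 : ℤ) : ℂ) by push_cast; ring,
        Complex.exp_add, hec, mul_one]
    rw [h1]
    congr 1
    push_cast; ring
  have hcont3 : Continuous (fun x : ℝ => Complex.exp (c * (x : ℂ)) * ((1 - x ^ 2 : ℝ) : ℂ)) :=
    hce.mul (Complex.continuous_ofReal.comp (continuous_const.sub (continuous_pow 2)))
  rw [hshift,
    ← intervalIntegral.integral_add
      (hcont1.intervalIntegrable 0 1)
      (hcont3.intervalIntegrable 0 1)]
  have hcomb : (∫ x in (0:ℝ)..1, (Complex.exp (c * (x : ℂ)) * ((x : ℂ)) ^ 2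
      + Complex.exp (c * (x : ℂ)) * ((1 - x ^ 2 : ℝ) : ℂ)))
      = ∫ x in (0:ℝ)..1, Complex.exp (c * (x : ℂ)) := by
    apply intervalIntegral.integral_congr
    intro x hx
    simp only
    push_cast; ring
  rw [hcomb]
  by_cases hk0 : k = 0
  · have hc0 : c = 0 := by rw [hc, hk0]; simp
    simp [hc0, hk0]
  · have hc0 : c ≠ 0 := by
      rw [hc]
      intro hz
      have := mul_eq_zero.mp hz
      rcases this with h | h
      · have := mul_eq_zero.mp h
        rcases this with h | h
        · have := mul_eq_zero.mp h
          rcases this with h | h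
          · norm_num at h
          · exact Real.pi_ne_zero (by exact_mod_cast h)
        · exact Complex.I_ne_zero h
      · exact hk0 (by exact_mod_cast h)
    rw [integral_exp_mul_complex hc0]
    have e1 : Complex.exp (c * ((1:ℝ) : ℂ)) = 1 := by
      rw [show c * ((1:ℝ) : ℂ) = c * ((1 : ℤ) : ℂ) by push_cast; ring, hec]
    have e0 : Complex.exp (c * ((0:ℝ) : ℂ)) = 1 := by simp
    rw [e1, e0]
    simp [hk0]

lemma gEx2_eq (x : ℝ) : gEx2 x = (gR x : ℂ) := by
  unfold gEx2 gR; split_ifs <;> simp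

/-- **Example**. The Weyl–Heisenberg system `{E_m T_{2n} gEx2}` (`a = 2`, `b = 1`)
is an orthonormal family in `L²(ℝ)`. -/
theorem example_orthonormal
    (m n m' n' : ℤ) :
    ∫ x : ℝ, whFun gEx2 2 1 m n x * conj (whFun gEx2 2 1 m' n' x) =
      if m = m' ∧ n = n' then 1 else 0 := by
  by_cases hn : n = n'
  · subst hn
    have hpt : ∀ x : ℝ, whFun gEx2 2 1 m n x * conj (whFun gEx2 2 1 m' n x)
        = Complex.exp (2 * Real.pi * Complex.I * ((m - m' : ℤ) : ℂ) * (((x - (n : ℝ) * 2) : ℝ) : ℂ))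
          * ((gR (x - (n : ℝ) * 2) : ℂ)) ^ 2 := by
      intro x
      unfold whFun
      rw [gEx2_eq, map_mul, ← Complex.exp_conj, Complex.conj_ofReal]
      simp only [map_mul, Complex.conj_I, Complex.conj_ofReal, map_ofNat, map_intCast]
      rw [mul_mul_mul_comm, ← Complex.exp_add]
      have harg : 2 * (Real.pi : ℂ) * Complex.I * ((m : ℂ) * ((1:ℝ) : ℂ)) * (x : ℂ)
          + 2 * (Real.pi : ℂ) * -Complex.I * ((m' : ℂ) * ((1:ℝ) : ℂ)) * (x : ℂ)
          = 2 * Real.pi * Complex.I * ((m - m' : ℤ) : ℂ) * (((x - (n : ℝ) * 2) : ℝ) : ℂ)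
            + ((m - m') * (n * 2) : ℤ) * (2 * Real.pi * Complex.I) := by
        push_cast; ring
      rw [harg, Complex.exp_add, Complex.exp_int_mul_two_pi_mul_I, mul_one, sq]
    simp only [hpt]
    rw [integral_sub_right_eq_self
      (fun y : ℝ => Complex.exp (2 * Real.pi * Complex.I * ((m - m' : ℤ) : ℂ) * (y : ℂ))
        * ((gR y : ℂ)) ^ 2) ((n : ℝ) * 2)]
    rw [keyIntegral (m - m')]
    by_cases hm : m = m' <;> simp [hm, sub_eq_zero]
  · have hpt : ∀ x : ℝ, whFun gEx2 2 1 m n x * conj (whFun gEx2 2 1 m' n' x) = 0 := by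
      intro x
      unfold whFun
      rcases eq_or_ne (gEx2 (x - (n : ℝ) * 2)) 0 with h | h
      · rw [h]; ring
      rcases eq_or_ne (gEx2 (x - (n' : ℝ) * 2)) 0 with h' | h'
      · rw [h']; simp
      exfalso
      have h1 : gR (x - (n : ℝ) * 2) ≠ 0 := by
        intro hz; apply h; rw [gEx2_eq, hz]; simp
      have h2 : gR (x - (n' : ℝ) * 2) ≠ 0 := by
        intro hz; apply h'; rw [gEx2_eq, hz]; simp
      have s1 := gR_support h1
      have s2 := gR_support h2
      rcases lt_or_gt_of_ne hn with hlt | hlt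
      · have : (n : ℝ) + 1 ≤ (n' : ℝ) := by exact_mod_cast hlt
        linarith [s1.1, s1.2, s2.1, s2.2]
      · have : (n' : ℝ) + 1 ≤ (n : ℝ) := by exact_mod_cast hlt
        linarith [s1.1, s1.2, s2.1, s2.2]
    simp only [hpt, integral_zero]
    rw [if_neg (by tauto)]
end
end

section
/- Define g(x) = x for x ∈ [0,1], g(x) = √(2x−x²) for x ∈ (1,2], and g(x) = 0 otherwise, and let G(x) = ∑_{n∈ℤ}|g(x−2n)|² and N_G = {x : G(x) = 0}. Then for every δ > 0 there exists a set of positive Lebesgue measure contained in ℝ − N_G on which 0 < G(x) < δ; in particular, G is not essentially bounded below by any positive constant on ℝ − N_G, even though {E_m T_{2n} g}_{m,n∈ℤ} is a frame sequence. -/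
noncomputable section
open MeasureTheory Complex Filter Set
open scoped ENNReal NNReal ComplexConjugate

/-!
On `[0, 1]` the profile `|g|²` is `x²` and on `[1, 2]` it is `1 - (x - 1)²`, so its
`1`-periodization is identically `1`; as `g` is supported in `(0, 2]`, this makes
`∫ e^{2πikx} |g x|² dx = δ_{k0}`. The translates `T_{2n} g` have disjoint supports, so the
system `{E_m T_{2n} g}` is orthonormal, hence (Parseval on the closed span) a frame sequence with
bounds `1, 1`. On the other hand, on `(0, 1]` only the translate `n = 0` contributes to `G`,
and there `G x = x²`, which is positive but arbitrarily small near `0`.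
-/

open Real Submodule
open scoped InnerProductSpace

section Parseval

variable {𝕜 E ι : Type*} [RCLike 𝕜] [NormedAddCommGroup E] [InnerProductSpace 𝕜 E]

theorem HilbertBasis.hasSum_sq_norm_inner_left (b : HilbertBasis ι 𝕜 E) (x : E) :
    HasSum (fun i => ‖⟪x, b i⟫_𝕜‖ ^ 2) (‖x‖ ^ 2) := by
  have h (i : ι) : ⟪x, b i⟫_𝕜 * ⟪b i, x⟫_𝕜 = ((‖⟪x, b i⟫_𝕜‖ ^ 2 : ℝ) : 𝕜) := by
    rw [← inner_conj_symm (b i) x, RCLike.mul_conj, RCLike.ofReal_pow]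
  have := (b.hasSum_inner_mul_inner x x).mapL RCLike.reCLM
  simp only [h, RCLike.reCLM_apply, RCLike.ofReal_re] at this
  rwa [inner_self_eq_norm_sq] at this

theorem Orthonormal.hasSum_sq_norm_inner_of_mem_closure_span [CompleteSpace E] {v : ι → E}
    (hv : Orthonormal 𝕜 v) {x : E} (hx : x ∈ closure (span 𝕜 (range v) : Set E)) :
    HasSum (fun i => ‖⟪x, v i⟫_𝕜‖ ^ 2) (‖x‖ ^ 2) := by
  let K := (span 𝕜 (range v)).topologicalClosure
  have hvK (i : ι) : v i ∈ K := le_topologicalClosure _ (subset_span (mem_range_self i))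
  let w (i : ι) : K := ⟨v i, hvK i⟩
  have himage : ((↑) : K → E) '' span 𝕜 (range w) = span 𝕜 (range v) := by
    rw [← K.coe_subtype, ← map_coe, map_span, ← range_comp]
    rfl
  have hdense : ⊤ ≤ (span 𝕜 (range w)).topologicalClosure := by
    rintro y -
    rw [← SetLike.mem_coe, topologicalClosure_coe, closure_subtype, himage]
    exact (topologicalClosure_coe _).subset y.2
  have hxK : x ∈ K := (topologicalClosure_coe _).superset hx
  have hw : Orthonormal 𝕜 w := hv.codRestrict K hvK
  have := (HilbertBasis.mk hw hdense).hasSum_sq_norm_inner_left ⟨x, hxK⟩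
  rwa [HilbertBasis.coe_mk] at this

end Parseval

theorem Orthonormal.isFrameSeqWith_one_one {H ι : Type*} [NormedAddCommGroup H]
    [InnerProductSpace ℂ H] [CompleteSpace H] {v : ι → H} (hv : Orthonormal ℂ v) :
    IsFrameSeqWith v 1 1 := by
  intro f hf
  rw [(hv.hasSum_sq_norm_inner_of_mem_closure_span hf).tsum_eq, one_mul]
  exact ⟨le_rfl, le_rfl⟩

theorem orthonormal_of_integral_conj_mul {α ι : Type*} [MeasurableSpace α] {μ : Measure α}
    [DecidableEq ι] {F : ι → Lp ℂ 2 μ} {f : ι → α → ℂ} (hF : ∀ i, F i =ᵐ[μ] f i)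
    (hf : ∀ i j, ∫ x, conj (f i x) * f j x ∂μ = if i = j then 1 else 0) :
    Orthonormal ℂ F := by
  refine orthonormal_iff_ite.mpr fun i j => ?_
  rw [L2.inner_def, ← hf i j]
  refine integral_congr_ae ?_
  filter_upwards [hF i, hF j] with x hi hj
  rw [RCLike.inner_apply', hi, hj]

theorem eq_of_sub_zsmul_mem_Ioc {α : Type*} [AddCommGroup α] [LinearOrder α]
    [IsOrderedAddMonoid α] [Archimedean α] {p : α} (hp : 0 < p) {x : α} {n n' : ℤ}
    (hn : x - n • p ∈ Ioc 0 p) (hn' : x - n' • p ∈ Ioc 0 p) : n = n' := by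
  have hdiv (m : ℤ) (hm : x - m • p ∈ Ioc 0 p) : toIocDiv hp 0 x = m :=
    toIocDiv_eq_of_sub_zsmul_mem_Ioc hp (by rwa [zero_add])
  exact (hdiv n hn).symm.trans (hdiv n' hn')

section Translates

variable {E : Type*} {g : ℝ → E} {a : ℝ}

theorem eq_of_translate_ne_zero [Zero E] (ha : 0 < a) (hg : ∀ x ∉ Ioc 0 a, g x = 0) {x : ℝ}
    {n n' : ℤ} (hn : g (x - n * a) ≠ 0) (hn' : g (x - n' * a) ≠ 0) : n = n' := by
  refine eq_of_sub_zsmul_mem_Ioc ha (x := x) ?_ ?_ <;> rw [zsmul_eq_mul]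
  exacts [not_imp_comm.1 (hg _) hn, not_imp_comm.1 (hg _) hn']

theorem tsum_sq_norm_translate_of_mem_Ioc [NormedAddCommGroup E] (ha : 0 < a)
    (hg : ∀ x ∉ Ioc 0 a, g x = 0) {x : ℝ} (hx : x ∈ Ioc 0 a) : ∑' n : ℤ, ‖g (x - n * a)‖ ^ 2 = ‖g x‖ ^ 2 := by
  rw [tsum_eq_single 0 fun n hn => ?_]
  · simp
  rw [hg _ fun h => hn (eq_of_sub_zsmul_mem_Ioc ha (by rwa [zsmul_eq_mul]) (by simpa using hx)),
    norm_zero, zero_pow two_ne_zero]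

end Translates

theorem conj_whFun_mul_whFun (g : ℝ → ℂ) (a b : ℝ) (m n m' n' : ℤ) (x : ℝ) :
    conj (whFun g a b m n x) * whFun g a b m' n' x =
      cexp (2 * π * I * ((m' - m : ℤ) * b) * x) * (conj (g (x - n * a)) * g (x - n' * a)) := by
  have hexp : conj (cexp (2 * π * I * (m * b) * x)) * cexp (2 * π * I * (m' * b) * x) =
      cexp (2 * π * I * ((m' - m : ℤ) * b) * x) := by
    rw [← exp_conj, ← Complex.exp_add]
    congr 1
    simp only [map_mul, conj_ofReal, conj_I, map_ofNat, map_intCast, Int.cast_sub]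
    ring
  rw [whFun, whFun, map_mul, ← hexp]
  ring

theorem integral_conj_whFun_mul_whFun {g : ℝ → ℂ} {a : ℝ} (b : ℝ) (ha : 0 < a)
    (hg : ∀ x ∉ Ioc 0 a, g x = 0)
    (hcoef : ∀ k : ℤ, ∫ y : ℝ, cexp (2 * π * I * (k * b) * y) * (‖g y‖ : ℂ) ^ 2 =
      if k = 0 then 1 else 0)
    (p q : ℤ × ℤ) :
    ∫ x, conj (whFun g a b p.1 p.2 x) * whFun g a b q.1 q.2 x = if p = q then 1 else 0 := by
  obtain ⟨m, n⟩ := p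
  obtain ⟨m', n'⟩ := q
  simp only [conj_whFun_mul_whFun]
  -- For `n = n'` the shift `x ↦ x + n a` costs a unimodular factor, which is `1` when `m = m'`
  -- and multiplies `0` otherwise; for `n ≠ n'` the two translates have disjoint supports.
  by_cases hn : n = n'
  · subst hn
    simp only [conj_mul']
    rw [← integral_add_right_eq_self _ (n * a)]
    simp only [add_sub_cancel_right, ofReal_add, mul_add, Complex.exp_add,
      mul_right_comm _ (cexp (_ * ((n * a : ℝ) : ℂ)))]
    rw [integral_mul_const, hcoef]
    by_cases hm : m = m' <;> simp [hm, sub_eq_zero, eq_comm]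
  · have hzero (x : ℝ) : conj (g (x - n * a)) * g (x - n' * a) = 0 := by
      rw [mul_eq_zero, map_eq_zero]
      by_contra! h
      exact hn (eq_of_translate_ne_zero ha hg h.1 h.2)
    simp [hzero, hn]

theorem intervalIntegral_exp_two_pi_I_int_mul (k : ℤ) :
    ∫ y in (0 : ℝ)..1, cexp (2 * π * I * k * y) = if k = 0 then 1 else 0 := by
  split_ifs with hk
  · simp [hk]
  have hc : 2 * π * I * k ≠ 0 := by simp [hk, pi_ne_zero]
  have h1 : cexp (2 * π * I * k) = 1 := by
    rw [mul_comm]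
    exact exp_int_mul_two_pi_mul_I k
  simp [integral_exp_mul_complex hc, h1]

theorem integral_exp_mul_of_periodization_eq_one {h : ℝ → ℂ} (h_supp : ∀ y ∉ Ioc 0 2, h y = 0)
    (h_int : IntervalIntegrable h volume 0 2) (h_per : ∀ y ∈ Icc (0 : ℝ) 1, h y + h (y + 1) = 1)
    (k : ℤ) : ∫ y : ℝ, cexp (2 * π * I * k * y) * h y = if k = 0 then 1 else 0 := by
  set e : ℝ → ℂ := fun y => cexp (2 * π * I * k * y)
  have he (y : ℝ) : e (y + 1) = e y := by
    simp only [e]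
    rw [show 2 * π * I * k = k * (2 * π * I) by ring]
    simp only [ofReal_add, ofReal_one, mul_add, mul_one, Complex.exp_add,
      exp_int_mul_two_pi_mul_I]
  have hint : IntervalIntegrable (fun y => e y * h y) volume 0 2 :=
    h_int.continuousOn_mul (by fun_prop)
  have hint₁ := hint.mono_set (uIcc_subset_uIcc_left (by norm_num : (1:ℝ) ∈ uIcc 0 2))
  have hint₂ := hint.mono_set (uIcc_subset_uIcc_right (by norm_num : (1:ℝ) ∈ uIcc 0 2))
  have hint₃ : IntervalIntegrable (fun y => e (y + 1) * h (y + 1)) volume 0 1 :=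
    (IntervalIntegrable.comp_add_right_iff (f := fun y => e y * h y)).mpr (by norm_num [hint₂])
  calc ∫ y : ℝ, e y * h y
      = ∫ y in (0 : ℝ)..2, e y * h y := by
        rw [intervalIntegral.integral_of_le zero_le_two,
          setIntegral_eq_integral_of_forall_compl_eq_zero fun y hy => by simp [h_supp y hy]]
    _ = (∫ y in (0 : ℝ)..1, e y * h y) + ∫ y in (0 : ℝ)..1, e (y + 1) * h (y + 1) := by
        rw [← intervalIntegral.integral_add_adjacent_intervals hint₁ hint₂,
          intervalIntegral.integral_comp_add_right (fun y => e y * h y)]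
        norm_num
    _ = ∫ y in (0 : ℝ)..1, e y * h y + e (y + 1) * h (y + 1) :=
        (intervalIntegral.integral_add hint₁ hint₃).symm
    _ = ∫ y in (0 : ℝ)..1, e y := by
        refine intervalIntegral.integral_congr fun y hy => ?_
        rw [uIcc_of_le zero_le_one] at hy
        simp only [he, ← mul_add, h_per y hy, mul_one]
    _ = if k = 0 then 1 else 0 := intervalIntegral_exp_two_pi_I_int_mul k

theorem gEx2_eq_zero_of_notMem_Ioc {x : ℝ} (hx : x ∉ Ioc (0 : ℝ) 2) : gEx2 x = 0 := by
  simp only [mem_Ioc, not_and_or, not_lt, not_le] at hx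
  unfold gEx2
  split_ifs with h₁ h₂
  · have : x = 0 := by rcases hx with hx | hx <;> linarith [h₁.1, h₁.2]
    simp [this]
  · rcases hx with hx | hx <;> linarith [h₂.1, h₂.2]
  · rfl

theorem gEx2_of_mem_Icc {x : ℝ} (hx : x ∈ Icc (0 : ℝ) 1) : gEx2 x = x := if_pos hx

theorem sq_norm_gEx2_of_mem_Icc_one_two {x : ℝ} (hx : x ∈ Icc (1 : ℝ) 2) :
    ‖gEx2 x‖ ^ 2 = 2 * x - x ^ 2 := by
  rcases hx.1.eq_or_lt with rfl | h₁
  · norm_num [gEx2]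
  · rw [gEx2, if_neg (by rintro ⟨-, h⟩; linarith), if_pos ⟨h₁, hx.2⟩, norm_real, norm_eq_abs,
      sq_abs, sq_sqrt (by nlinarith [hx.2])]

theorem sq_norm_gEx2_add_sq_norm_gEx2_add_one {y : ℝ} (hy : y ∈ Icc (0 : ℝ) 1) :
    ‖gEx2 y‖ ^ 2 + ‖gEx2 (y + 1)‖ ^ 2 = 1 := by
  rw [gEx2_of_mem_Icc hy, sq_norm_gEx2_of_mem_Icc_one_two ⟨by linarith [hy.1], by linarith [hy.2]⟩,
    norm_real, norm_eq_abs, sq_abs]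
  ring

theorem norm_gEx2_le_one (x : ℝ) : ‖gEx2 x‖ ≤ 1 := by
  by_cases hx : x ∈ Ioc (0 : ℝ) 2
  · rw [← sq_le_one_iff₀ (norm_nonneg _)]
    rcases le_total x 1 with h | h
    · linarith [sq_norm_gEx2_add_sq_norm_gEx2_add_one ⟨hx.1.le, h⟩, sq_nonneg ‖gEx2 (x + 1)‖]
    · have := sq_norm_gEx2_add_sq_norm_gEx2_add_one (y := x - 1) ⟨by linarith, by linarith [hx.2]⟩
      rw [sub_add_cancel] at this
      linarith [sq_nonneg ‖gEx2 (x - 1)‖]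
  · simp [gEx2_eq_zero_of_notMem_Ioc hx]

theorem measurable_gEx2 : Measurable gEx2 := by
  unfold gEx2
  exact Measurable.ite measurableSet_Icc (by fun_prop)
    (Measurable.ite measurableSet_Ioc (by fun_prop) measurable_const)

theorem intervalIntegrable_sq_norm_gEx2 :
    IntervalIntegrable (fun y => (‖gEx2 y‖ : ℂ) ^ 2) volume 0 2 :=
  (intervalIntegrable_const (c := (1 : ℂ))).mono_fun (by have := measurable_gEx2; fun_prop)
    (ae_of_all _ fun y => by simpa using norm_gEx2_le_one y)

theorem tsum_sq_norm_gEx2_sub_mul_two {x : ℝ} (hx : x ∈ Ioc (0 : ℝ) 1) :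
    ∑' n : ℤ, ‖gEx2 (x - n * 2)‖ ^ 2 = x ^ 2 := by
  rw [tsum_sq_norm_translate_of_mem_Ioc two_pos (fun _ => gEx2_eq_zero_of_notMem_Ioc)
      ⟨hx.1, by linarith [hx.2]⟩, gEx2_of_mem_Icc ⟨hx.1.le, hx.2⟩, norm_real, norm_eq_abs, sq_abs]

theorem integral_conj_whFun_gEx2_mul_whFun_gEx2 (p q : ℤ × ℤ) :
    ∫ x, conj (whFun gEx2 2 1 p.1 p.2 x) * whFun gEx2 2 1 q.1 q.2 x =
      if p = q then 1 else 0 := by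
  refine integral_conj_whFun_mul_whFun 1 two_pos (fun _ => gEx2_eq_zero_of_notMem_Ioc)
    (fun k => ?_) p q
  simpa using integral_exp_mul_of_periodization_eq_one (fun y hy => by
      simp [gEx2_eq_zero_of_notMem_Ioc hy]) intervalIntegrable_sq_norm_gEx2
    (fun y hy => by exact_mod_cast sq_norm_gEx2_add_sq_norm_gEx2_add_one hy) k

/-- **Example**. For `G(x) = ∑ₙ |gEx2(x - 2n)|²`, the function `G` takes arbitrarily
small positive values on sets of positive measure inside `ℝ - N_G` (so `G` is not
essentially bounded below by a positive constant there), even though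
`{E_m T_{2n} gEx2}` is a frame sequence. -/
theorem example_G_not_bounded_below
    (F : ℤ × ℤ → Lp ℂ 2 (volume : Measure ℝ))
    (hF : ∀ p : ℤ × ℤ, (F p : ℝ → ℂ) =ᵐ[volume] whFun gEx2 2 1 p.1 p.2) :
    (∀ δ : ℝ, 0 < δ → ∃ s : Set ℝ, MeasurableSet s ∧ 0 < volume s ∧
        ∀ x ∈ s, 0 < (∑' n : ℤ, ‖gEx2 (x - (n : ℝ) * 2)‖ ^ 2) ∧
          (∑' n : ℤ, ‖gEx2 (x - (n : ℝ) * 2)‖ ^ 2) < δ) ∧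
      ∃ A B : ℝ, 0 < A ∧ 0 < B ∧ IsFrameSeqWith F A B := by
  have horth : Orthonormal ℂ F :=
    orthonormal_of_integral_conj_mul hF integral_conj_whFun_gEx2_mul_whFun_gEx2
  refine ⟨fun δ hδ => ?_, 1, 1, one_pos, one_pos, horth.isFrameSeqWith_one_one⟩
  have hε : 0 < min 1 √δ := lt_min one_pos (sqrt_pos.2 hδ)
  refine ⟨Ioo 0 (min 1 √δ), measurableSet_Ioo, by simpa using hε, fun x hx => ?_⟩
  rw [tsum_sq_norm_gEx2_sub_mul_two ⟨hx.1, hx.2.le.trans (min_le_left _ _)⟩]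
  exact ⟨pow_pos hx.1 2, (lt_sqrt hx.1.le).1 (hx.2.trans_le (min_le_right _ _))⟩
end
end
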